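/- (Vizing's Adjacency Lemma, part (b)) Let G be a Δ-critical graph and let u and v be adjacent vertices of G with d(v) = Δ. Then u is adjacent to at least two vertices of degree Δ. -/

import Mathlib

open SimpleGraph Finset

variable {V : Type*}

/-- `G` has a `K₅` minor: five pairwise disjoint nonempty connected branch sets,
pairwise joined by an edge of `G`. -/
def SimpleGraph.HasK5Minor (G : SimpleGraph V) : Prop :=
  ∃ S : Fin 5 → Set V,
    (∀ i, (S i).Nonempty) ∧
    (∀ i, (G.induce (S i)).Connected) ∧
    (∀ i j, i ≠ j → Disjoint (S i) (S j)) ∧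
    (∀ i j, i ≠ j → ∃ u ∈ S i, ∃ v ∈ S j, G.Adj u v)

/-- The chromatic index of `G`, as the chromatic number of its line graph. -/
noncomputable def SimpleGraph.chromaticIndex (G : SimpleGraph V) : ℕ∞ :=
  G.lineGraph.chromaticNumber

/-- `G` is a `Δ`-critical graph (`Δ = G.maxDegree`): it is connected and class 2,
and deleting any edge decreases the chromatic index. -/
def SimpleGraph.IsDeltaCritical [Fintype V] (G : SimpleGraph V) [DecidableRel G.Adj] : Prop :=
  G.Connected ∧ G.chromaticIndex = (G.maxDegree : ℕ∞) + 1 ∧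
    ∀ e ∈ G.edgeSet, (G.deleteEdges {e}).chromaticIndex < G.chromaticIndex

/-- The neighborhood `N(X)` of a set of vertices `X`. -/
def SimpleGraph.setNbhd (G : SimpleGraph V) (X : Set V) : Set V :=
  {v | v ∉ X ∧ ∃ u ∈ X, G.Adj u v}

/-!
Colour `G - uv` with `Δ` colours. Vizing's fan argument shows that along a fan `v = w 0, w 1, …`
at `u` (the edge `u (w (j + 1))` carrying a colour missing at `w j`) the sets of colours missing at
`u` and at the `w j` are pairwise disjoint: a colour missing at `u` and at the last vertex would
let one shift the colours down the fan and colour `uv`, and a colour missing at two fan vertices is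
reduced to that case by a Kempe chain interchange, since a chain is a path and has only two ends.
If every neighbour of `u` missed a colour, a colour missing at the last vertex of a fan would be
present at `u`, and the fan could be extended along the edge of that colour indefinitely, with
pairwise distinct colours, which is impossible with `Δ` colours. So some neighbour `x` of `u` sees
all `Δ` colours; then `d(x) = Δ`, and `x ≠ v` because the uncoloured edge `uv` leaves a colour
missing at `v`.
-/

namespace SimpleGraph

theorem Connected.card_filter_degree_le_one_le_two [Fintype V] {H : SimpleGraph V}
    [DecidableRel H.Adj] (hH : H.Connected) (hdeg : ∀ x, H.degree x ≤ 2) :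
    #{x | H.degree x ≤ 1} ≤ 2 := by
  classical
  have hedges : Fintype.card V ≤ #H.edgeFinset + 1 := by
    have := hH.card_vert_le_card_edgeSet_add_one
    rwa [Nat.card_eq_fintype_card, Nat.card_eq_fintype_card, ← edgeFinset_card] at this
  have hsum : ∑ x, H.degree x + #{x | H.degree x ≤ 1} ≤ 2 * Fintype.card V :=
    calc ∑ x, H.degree x + #{x | H.degree x ≤ 1}
        = ∑ x, (H.degree x + if H.degree x ≤ 1 then 1 else 0) := by
          rw [card_filter, sum_add_distrib]
      _ ≤ ∑ _x : V, 2 := sum_le_sum fun x _ => by have := hdeg x; split_ifs <;> omega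
      _ = 2 * Fintype.card V := by simp [mul_comm]
  rw [sum_degrees_eq_twice_card_edges] at hsum
  omega

theorem Reachable.not_reachable_of_degree_le_one [Fintype V] {H : SimpleGraph V}
    [DecidableRel H.Adj] (hdeg : ∀ x, H.degree x ≤ 2) {x y z : V} (hxy : x ≠ y) (hxz : x ≠ z)
    (hyz : y ≠ z) (hx : H.degree x ≤ 1) (hy : H.degree y ≤ 1) (hz : H.degree z ≤ 1)
    (hrxy : H.Reachable x y) : ¬ H.Reachable x z := by
  classical
  intro hrxz
  let S := (H.connectedComponentMk x).supp
  have hdegS (a : S) : (H.induce S).degree a = H.degree a := degree_induce_of_neighborSet_subset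
    fun _ hb => (H.connectedComponentMk x).mem_supp_of_adj_mem_supp a.2 hb
  have hS : (H.induce S).Connected := (H.connectedComponentMk x).connected_toSimpleGraph
  have hx' : x ∈ S := rfl
  have hy' : y ∈ S := ConnectedComponent.sound hrxy.symm
  have hz' : z ∈ S := ConnectedComponent.sound hrxz.symm
  have hsub : ({⟨x, hx'⟩, ⟨y, hy'⟩, ⟨z, hz'⟩} : Finset S) ⊆
      ({a | (H.induce S).degree a ≤ 1} : Finset S) := by
    intro a ha
    simp only [mem_insert, mem_singleton] at ha
    rcases ha with rfl | rfl | rfl <;> simpa [hdegS]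
  have h3 := card_le_card hsub
  rw [card_insert_of_notMem (by simp [hxy, hxz]), card_pair (by simpa using hyz)] at h3
  have := hS.card_filter_degree_le_one_le_two fun a => (hdegS a).trans_le (hdeg a)
  omega

variable {α : Type*} {G : SimpleGraph V} {c : Sym2 V → Option α} {x y : V} {k : α}

/-- A proper partial edge colouring: `c e = none` means that `e` is uncoloured. -/
structure IsPartialEdgeColoring (G : SimpleGraph V) (c : Sym2 V → Option α) : Prop where
  mem_edgeSet {e : Sym2 V} {k : α} : c e = some k → e ∈ G.edgeSet
  eq_of_eq_some {x y z : V} {k : α} : c s(x, y) = some k → c s(x, z) = some k → y = z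

def missingColors (c : Sym2 V → Option α) (x : V) : Set α := {k | ∀ y, c s(x, y) ≠ some k}

/-- A proper colouring of `G - e`, seen as a partial colouring of `G`. -/
structure IsEdgeColoringExcept (G : SimpleGraph V) (c : Sym2 V → Option α) (e : Sym2 V) : Prop
    extends G.IsPartialEdgeColoring c where
  eq_none_iff {f : Sym2 V} : f ∈ G.edgeSet → (c f = none ↔ f = e)

namespace IsPartialEdgeColoring

theorem adj (hc : G.IsPartialEdgeColoring c) (h : c s(x, y) = some k) : G.Adj x y :=
  hc.mem_edgeSet h

theorem update_some [DecidableEq V] (hc : G.IsPartialEdgeColoring c) (hxy : G.Adj x y)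
    (hx : k ∈ missingColors c x) (hy : k ∈ missingColors c y) :
    G.IsPartialEdgeColoring (Function.update c s(x, y) (some k)) where
  mem_edgeSet {f _} h := by
    rcases eq_or_ne f s(x, y) with rfl | hf
    · exact hxy
    · exact hc.mem_edgeSet (by rwa [Function.update_of_ne hf] at h)
  eq_of_eq_some {a b b' k'} hb hb' := by
    have hmiss {b} (h : s(a, b) = s(x, y)) : k ∈ missingColors c a := by
      rcases Sym2.eq_iff.mp h with ⟨rfl, -⟩ | ⟨rfl, -⟩
      exacts [hx, hy]
    rw [Function.update_apply] at hb hb'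
    split_ifs at hb hb' with h h' h'
    · rcases Sym2.eq_iff.mp (h.trans h'.symm) with ⟨-, rfl⟩ | ⟨rfl, rfl⟩ <;> rfl
    · cases hb
      exact absurd hb' (hmiss h b')
    · cases hb'
      exact absurd hb (hmiss h' b)
    · exact hc.eq_of_eq_some hb hb'

theorem card_le_card_colored [Fintype V] [DecidableRel G.Adj] [Fintype α]
    (hc : G.IsPartialEdgeColoring c) (hx : missingColors c x = ∅) :
    Fintype.card α ≤ #{y ∈ G.neighborFinset x | c s(x, y) ≠ none} := by
  have hpresent (k : α) : ∃ y, c s(x, y) = some k := by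
    by_contra! h
    exact (Set.eq_empty_iff_forall_notMem.mp hx) k h
  choose f hf using hpresent
  refine card_le_card_of_injOn f (fun k _ => ?_) fun k _ k' _ h => ?_
  · simpa [hf k] using hc.adj (hf k)
  · simpa [h, hf k'] using (hf k).symm

theorem card_le_degree [Fintype V] [DecidableRel G.Adj] [Fintype α]
    (hc : G.IsPartialEdgeColoring c) (hx : missingColors c x = ∅) :
    Fintype.card α ≤ G.degree x :=
  (hc.card_le_card_colored hx).trans
    ((card_filter_le _ _).trans_eq (card_neighborFinset_eq_degree ..))

theorem card_lt_degree [Fintype V] [DecidableRel G.Adj] [Fintype α]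
    (hc : G.IsPartialEdgeColoring c) (hx : missingColors c x = ∅) (hxy : G.Adj x y)
    (hnone : c s(x, y) = none) : Fintype.card α < G.degree x := by
  refine (hc.card_le_card_colored hx).trans_lt ?_
  rw [← card_neighborFinset_eq_degree]
  exact card_lt_card (filter_ssubset.mpr ⟨y, by simpa using hxy, by simpa using hnone⟩)

theorem nonempty_missingColors [Fintype V] [DecidableRel G.Adj] [Fintype α]
    (hc : G.IsPartialEdgeColoring c) (hxy : G.Adj x y) (hnone : c s(x, y) = none)
    (hx : G.degree x ≤ Fintype.card α) : (missingColors c x).Nonempty :=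
  Set.nonempty_iff_ne_empty.mpr fun h => (hc.card_lt_degree h hxy hnone).not_ge hx

theorem colorable_lineGraph [Fintype α] (hc : G.IsPartialEdgeColoring c)
    (htotal : ∀ e ∈ G.edgeSet, c e ≠ none) : G.lineGraph.Colorable (Fintype.card α) := by
  refine Coloring.colorable ⟨fun e => (c e).get (Option.isSome_iff_ne_none.mpr (htotal e e.2)), ?_⟩
  rintro ⟨e₁, he₁⟩ ⟨e₂, he₂⟩ hadj heq
  obtain ⟨hne, x, hx₁, hx₂⟩ := lineGraph_adj_iff_exists.mp hadj
  obtain ⟨y, rfl⟩ := Sym2.mem_iff_exists.mp hx₁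
  obtain ⟨z, rfl⟩ := Sym2.mem_iff_exists.mp hx₂
  have hcol : c s(x, y) = c s(x, z) := by simpa [Option.get_inj] using heq
  obtain ⟨k, hk⟩ := Option.ne_none_iff_exists'.mp (htotal _ he₁)
  obtain rfl := hc.eq_of_eq_some hk (hcol ▸ hk)
  exact hne rfl

end IsPartialEdgeColoring

theorem missingColors_update [DecidableEq V] (hk : k ∈ missingColors c x) {o : Option α}
    (ho : o ≠ some k) (e : Sym2 V) : k ∈ missingColors (Function.update c e o) x := by
  intro y
  rw [Function.update_apply]
  split_ifs
  exacts [ho, hk y]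

theorem mem_missingColors_update_of_eq_some [DecidableEq V] (hc : G.IsPartialEdgeColoring c)
    (hxy : c s(x, y) = some k) {o : Option α} (ho : o ≠ some k) :
    k ∈ missingColors (Function.update c s(x, y) o) x := by
  intro z
  rw [Function.update_apply]
  split_ifs with h
  · exact ho
  · exact fun hz => h (by rw [hc.eq_of_eq_some hz hxy])

theorem IsEdgeColoringExcept.update_some [DecidableEq V] {e : Sym2 V}
    (hc : G.IsEdgeColoringExcept c e) (hxy : G.Adj x y) (hne : s(x, y) ≠ e)
    (hx : k ∈ missingColors c x) (hy : k ∈ missingColors c y) :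
    G.IsEdgeColoringExcept (Function.update c s(x, y) (some k)) e := by
  refine ⟨hc.toIsPartialEdgeColoring.update_some hxy hx hy, fun {f} hf => ?_⟩
  rcases eq_or_ne f s(x, y) with rfl | hf'
  · simpa using hne
  · rw [Function.update_of_ne hf', hc.eq_none_iff hf]

theorem exists_isEdgeColoringExcept_of_colorable {e : Sym2 V} {n : ℕ}
    (h : (G.deleteEdges {e}).lineGraph.Colorable n) :
    ∃ c : Sym2 V → Option (Fin n), G.IsEdgeColoringExcept c e := by
  classical
  obtain ⟨col⟩ := h
  refine ⟨fun f => if hf : f ∈ (G.deleteEdges {e}).edgeSet then some (col ⟨f, hf⟩) else none,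
    ⟨⟨fun {f k} hf => ?_, fun {x y z k} hy hz => ?_⟩, fun {f} hf => ?_⟩⟩
  · split_ifs at hf with h
    exact (edgeSet_deleteEdges _ ▸ h).1
  · split_ifs at hy hz with h₁ h₂
    by_contra hyz
    have hadj : (G.deleteEdges {e}).lineGraph.Adj ⟨_, h₁⟩ ⟨_, h₂⟩ := lineGraph_adj_iff_exists.mpr
      ⟨fun h => hyz (Sym2.congr_right.mp (congrArg Subtype.val h)), x, Sym2.mem_mk_left x y,
        Sym2.mem_mk_left x z⟩
    exact col.valid hadj (Option.some_injective _ (hy.trans hz.symm))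
  · simp [edgeSet_deleteEdges, hf]

theorem IsDeltaCritical.not_colorable_lineGraph [Fintype V] [DecidableRel G.Adj]
    (hG : G.IsDeltaCritical) : ¬ G.lineGraph.Colorable G.maxDegree := by
  intro h
  have := h.chromaticNumber_le
  rw [← chromaticIndex, hG.2.1] at this
  exact absurd this (by norm_cast; omega)

theorem IsDeltaCritical.colorable_lineGraph_deleteEdges [Fintype V] [DecidableRel G.Adj]
    (hG : G.IsDeltaCritical) {e : Sym2 V} (he : e ∈ G.edgeSet) :
    (G.deleteEdges {e}).lineGraph.Colorable G.maxDegree := by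
  have := hG.2.2 e he
  rw [hG.2.1, ENat.lt_add_one_iff (ENat.natCast_ne_top _)] at this
  exact chromaticNumber_le_iff_colorable.mp this

section Kempe

variable {a b : α} {r : V}

def kempeGraph (c : Sym2 V → Option α) (a b : α) : SimpleGraph V :=
  fromEdgeSet {e | c e = some a ∨ c e = some b}

@[simp]
theorem kempeGraph_adj :
    (kempeGraph c a b).Adj x y ↔ (c s(x, y) = some a ∨ c s(x, y) = some b) ∧ x ≠ y :=
  fromEdgeSet_adj _

variable [DecidableEq α]

instance [DecidableEq V] : DecidableRel (kempeGraph c a b).Adj :=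
  inferInstanceAs (DecidableRel (fromEdgeSet _).Adj)

theorem IsPartialEdgeColoring.card_filter_eq_some_le_one (hc : G.IsPartialEdgeColoring c)
    (s : Finset V) (x : V) (k : α) : #{y ∈ s | c s(x, y) = some k} ≤ 1 :=
  card_le_one.mpr fun _ hy _ hz => hc.eq_of_eq_some (mem_filter.mp hy).2 (mem_filter.mp hz).2

theorem degree_kempeGraph_le [Fintype V] [DecidableEq V] (x : V) :
    (kempeGraph c a b).degree x ≤ #{y | c s(x, y) = some a} + #{y | c s(x, y) = some b} := by
  rw [← card_neighborFinset_eq_degree]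
  refine (card_le_card fun y hy => ?_).trans (card_union_le _ _)
  rw [mem_neighborFinset, kempeGraph_adj] at hy
  simpa using hy.1

theorem IsPartialEdgeColoring.degree_kempeGraph_le_two [Fintype V] [DecidableEq V]
    (hc : G.IsPartialEdgeColoring c) (x : V) : (kempeGraph c a b).degree x ≤ 2 :=
  (degree_kempeGraph_le x).trans
    (add_le_add (hc.card_filter_eq_some_le_one _ x a) (hc.card_filter_eq_some_le_one _ x b))

theorem IsPartialEdgeColoring.degree_kempeGraph_le_one [Fintype V] [DecidableEq V]
    (hc : G.IsPartialEdgeColoring c) (hx : a ∈ missingColors c x ∨ b ∈ missingColors c x) :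
    (kempeGraph c a b).degree x ≤ 1 := by
  have hempty {k} (hk : k ∈ missingColors c x) : #{y | c s(x, y) = some k} = 0 :=
    card_eq_zero.mpr (filter_eq_empty_iff.mpr fun y _ => hk y)
  refine (degree_kempeGraph_le x).trans ?_
  rcases hx with hx | hx
  · rw [hempty hx, zero_add]; exact hc.card_filter_eq_some_le_one _ x b
  · rw [hempty hx, add_zero]; exact hc.card_filter_eq_some_le_one _ x a

open Classical in
/-- Interchange of the colours `a` and `b` on the Kempe chain of `r`, i.e. on the component of `r`
in `kempeGraph c a b`. -/
noncomputable def kempeSwap (c : Sym2 V → Option α) (a b : α) (r : V) : Sym2 V → Option α :=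
  fun e => if ∃ x ∈ e, (kempeGraph c a b).Reachable r x then (c e).map (Equiv.swap a b) else c e

theorem kempeSwap_mk_of_reachable (hx : (kempeGraph c a b).Reachable r x) (y : V) :
    kempeSwap c a b r s(x, y) = (c s(x, y)).map (Equiv.swap a b) :=
  if_pos ⟨x, Sym2.mem_mk_left x y, hx⟩

theorem kempeSwap_mk_of_not_reachable (hx : ¬ (kempeGraph c a b).Reachable r x) (y : V) :
    kempeSwap c a b r s(x, y) = c s(x, y) := by
  unfold kempeSwap
  split_ifs with h
  · obtain ⟨z, hz, hrz⟩ := h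
    rcases Sym2.mem_iff.mp hz with rfl | rfl
    · exact absurd hrz hx
    cases hxz : c s(x, z) with
    | none => rfl
    | some k =>
      have hne : x ≠ z := by rintro rfl; exact hx hrz
      have hab : k ≠ a ∧ k ≠ b := by
        constructor <;> rintro rfl <;>
          exact hx (hrz.trans (Adj.reachable (by simp [Sym2.eq_swap, hxz, hne.symm])))
      simp [Equiv.swap_apply_of_ne_of_ne hab.1 hab.2]
  · rfl

theorem kempeSwap_eq_none_iff (e : Sym2 V) : kempeSwap c a b r e = none ↔ c e = none := by
  unfold kempeSwap
  split_ifs <;> simp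

theorem IsPartialEdgeColoring.kempeSwap (hc : G.IsPartialEdgeColoring c) :
    G.IsPartialEdgeColoring (kempeSwap c a b r) where
  mem_edgeSet {e _} h := by
    obtain ⟨k, hk⟩ := Option.ne_none_iff_exists'.mp
      ((kempeSwap_eq_none_iff (c := c) (a := a) (b := b) (r := r) e).not.mp (by simp [h]))
    exact hc.mem_edgeSet hk
  eq_of_eq_some {x y z k} hy hz := by
    by_cases hx : (kempeGraph c a b).Reachable r x
    · rw [kempeSwap_mk_of_reachable hx] at hy hz
      have hswap {o : Option α} (h : o.map (Equiv.swap a b) = some k) :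
          o = some (Equiv.swap a b k) := by
        cases o with
        | none => simp at h
        | some k' =>
          simp only [Option.map_some, Option.some.injEq] at h
          simp [← h]
      exact hc.eq_of_eq_some (hswap hy) (hswap hz)
    · rw [kempeSwap_mk_of_not_reachable hx] at hy hz
      exact hc.eq_of_eq_some hy hz

theorem IsEdgeColoringExcept.kempeSwap {e : Sym2 V} (hc : G.IsEdgeColoringExcept c e) :
    G.IsEdgeColoringExcept (kempeSwap c a b r) e :=
  ⟨hc.toIsPartialEdgeColoring.kempeSwap, fun hf =>
    (kempeSwap_eq_none_iff _).trans (hc.eq_none_iff hf)⟩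

theorem mem_missingColors_kempeSwap_of_reachable (hx : (kempeGraph c a b).Reachable r x) :
    k ∈ missingColors (kempeSwap c a b r) x ↔ Equiv.swap a b k ∈ missingColors c x := by
  refine forall_congr' fun y => ?_
  rw [kempeSwap_mk_of_reachable hx, not_iff_not]
  cases c s(x, y) <;> simp [Equiv.swap_apply_eq_iff]

theorem missingColors_kempeSwap_of_not_reachable (hx : ¬ (kempeGraph c a b).Reachable r x) :
    missingColors (kempeSwap c a b r) x = missingColors c x := by
  simp only [missingColors, kempeSwap_mk_of_not_reachable hx]

end Kempe

section Fan

variable {u : V} {w : ℕ → V} {γ : ℕ → α} {p q : ℕ}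

structure IsFan (c : Sym2 V → Option α) (u : V) (w : ℕ → V) (γ : ℕ → α) (p : ℕ) : Prop where
  color_eq {j : ℕ} : j < p → c s(u, w (j + 1)) = some (γ j)
  mem_missingColors {j : ℕ} : j < p → γ j ∈ missingColors c (w j)

namespace IsFan

theorem mono (hf : IsFan c u w γ p) (hqp : q ≤ p) : IsFan c u w γ q :=
  ⟨fun hj => hf.color_eq (hj.trans_le hqp), fun hj => hf.mem_missingColors (hj.trans_le hqp)⟩

theorem adj (hf : IsFan c u w γ p) (hc : G.IsPartialEdgeColoring c) (hw0 : G.Adj u (w 0))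
    {j : ℕ} (hj : j ≤ p) : G.Adj u (w j) := by
  cases j with
  | zero => exact hw0
  | succ j => exact hc.adj (hf.color_eq hj)

theorem ne_of_mem_missingColors (hf : IsFan c u w γ p) (hk : k ∈ missingColors c u) {j : ℕ}
    (hj : j < p) : γ j ≠ k :=
  fun h => hk _ (h ▸ hf.color_eq hj)

theorem injOn_color (hf : IsFan c u w γ p)
    (hdisj : ∀ i j, i < j → j < p → Disjoint (missingColors c (w i)) (missingColors c (w j))) :
    Set.InjOn γ (Set.Iio p) := by
  have key {i j} (hij : i < j) (hj : j < p) : γ i ≠ γ j := fun h =>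
    Set.disjoint_left.mp (hdisj i j hij hj) (hf.mem_missingColors (hij.trans hj))
      (h ▸ hf.mem_missingColors hj)
  intro i hi j hj h
  rcases lt_trichotomy i j with hij | rfl | hji
  exacts [absurd h (key hij hj), rfl, absurd h.symm (key hji hi)]

theorem injOn (hf : IsFan c u w γ p) (hw0 : c s(u, w 0) = none)
    (hγ : Set.InjOn γ (Set.Iio p)) : Set.InjOn w (Set.Iic p) := by
  have key {i j} (hij : i < j) (hj : j ≤ p) : w i ≠ w j := by
    obtain ⟨j, rfl⟩ := Nat.exists_eq_add_of_lt hij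
    intro h
    have hcol : c s(u, w (i + j + 1)) = some (γ (i + j)) := hf.color_eq (by omega)
    rw [← h] at hcol
    cases i with
    | zero => simp [hw0] at hcol
    | succ i =>
      have := hγ (by simp; omega) (by simp; omega)
        (Option.some_injective _ ((hf.color_eq (by omega)).symm.trans hcol))
      omega
  intro i hi j hj h
  rcases lt_trichotomy i j with hij | rfl | hji
  exacts [absurd h (key hij hj), rfl, absurd h.symm (key hji hi)]

theorem update [DecidableEq V] (hf : IsFan c u w γ p) {e : Sym2 V} {o : Option α}
    (he : ∀ j < p, s(u, w (j + 1)) ≠ e) (ho : ∀ j < p, o ≠ some (γ j)) :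
    IsFan (Function.update c e o) u w γ p :=
  ⟨fun hj => by rw [Function.update_of_ne (he _ hj)]; exact hf.color_eq hj,
    fun hj => missingColors_update (hf.mem_missingColors hj) (ho _ hj) e⟩

/-- Recolouring `u (w p)` with `k` leaves `γ (p - 1)` missing at `u` and at `w (p - 1)`, so the
fan can be shortened until the uncoloured edge `u (w 0)` itself receives a colour. -/
theorem colorable_lineGraph [Fintype α] (hf : IsFan c u w γ p)
    (hc : G.IsEdgeColoringExcept c s(u, w 0)) (hw0 : G.Adj u (w 0)) (hw : Set.InjOn w (Set.Iic p))
    (hu : k ∈ missingColors c u) (hp : k ∈ missingColors c (w p)) :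
    G.lineGraph.Colorable (Fintype.card α) := by
  classical
  induction p generalizing c k with
  | zero =>
    refine (hc.toIsPartialEdgeColoring.update_some hw0 hu hp).colorable_lineGraph fun f hf => ?_
    rcases eq_or_ne f s(u, w 0) with rfl | hne
    · simp
    · rw [Function.update_of_ne hne]
      exact (hc.eq_none_iff hf).not.mpr hne
  | succ p ih =>
    have hwp : ∀ j ≤ p, s(u, w j) ≠ s(u, w (p + 1)) := fun j hj h =>
      (by omega : j ≠ p + 1) (hw (by simp; omega) (by simp) (Sym2.congr_right.mp h))
    have hk : ∀ j < p + 1, some k ≠ some (γ j) := fun j hj h =>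
      hf.ne_of_mem_missingColors hu hj (Option.some_injective _ h).symm
    refine ih (c := Function.update c s(u, w (p + 1)) (some k)) (k := γ p)
      ((hf.mono p.le_succ).update (fun j hj => hwp (j + 1) hj) fun j hj => hk j (by omega)) ?_
      (hw.mono (Set.Iic_subset_Iic.mpr p.le_succ)) ?_ ?_
    · exact hc.update_some (hf.adj hc.toIsPartialEdgeColoring hw0 le_rfl) (hwp 0 p.zero_le).symm
        hu hp
    · exact mem_missingColors_update_of_eq_some hc.toIsPartialEdgeColoring
        (hf.color_eq p.lt_succ_self) (hk p p.lt_succ_self)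
    · exact missingColors_update (hf.mem_missingColors p.lt_succ_self) (hk p p.lt_succ_self) _

theorem kempeSwap [DecidableEq α] {a b : α} {r : V} (hf : IsFan c u w γ p)
    (hu : ¬ (kempeGraph c a b).Reachable r u) (hb : b ∈ missingColors c u)
    (ha : ∀ j < p, (kempeGraph c a b).Reachable r (w j) → γ j ≠ a) :
    IsFan (kempeSwap c a b r) u w γ p where
  color_eq hj := by rw [kempeSwap_mk_of_not_reachable hu]; exact hf.color_eq hj
  mem_missingColors {j} hj := by
    by_cases hrj : (kempeGraph c a b).Reachable r (w j)
    · rw [mem_missingColors_kempeSwap_of_reachable hrj,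
        Equiv.swap_apply_of_ne_of_ne (ha j hj hrj) (hf.ne_of_mem_missingColors hb hj)]
      exact hf.mem_missingColors hj
    · rw [missingColors_kempeSwap_of_not_reachable hrj]
      exact hf.mem_missingColors hj

theorem disjoint_missingColors_center [Fintype α] (hf : IsFan c u w γ p)
    (hG : ¬ G.lineGraph.Colorable (Fintype.card α)) (hc : G.IsEdgeColoringExcept c s(u, w 0))
    (hw0 : G.Adj u (w 0))
    (hdisj : ∀ i j, i < j → j < p → Disjoint (missingColors c (w i)) (missingColors c (w j))) :
    Disjoint (missingColors c u) (missingColors c (w p)) :=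
  Set.disjoint_left.mpr fun _ hu hp => hG <| hf.colorable_lineGraph hc hw0
    (hf.injOn ((hc.eq_none_iff hw0).mpr rfl) (hf.injOn_color hdisj)) hu hp

/-- With `τ` missing at `w i` and `w p` and `β` missing at `u`, the vertices `u`, `w i`, `w p`
are ends of `τβ`-chains; as a chain has only two ends, a chain at `w i` or at `w p` avoids `u`,
and interchanging it makes `β` missing at `u` and at that fan vertex. -/
theorem disjoint_missingColors_of_lt [Fintype V] [DecidableRel G.Adj] [Fintype α] {i : ℕ}
    (hf : IsFan c u w γ p) (hc : G.IsEdgeColoringExcept c s(u, w 0))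
    (hu : G.degree u ≤ Fintype.card α) (hw0 : G.Adj u (w 0))
    (hcenter : ∀ q ≤ p, ∀ c' : Sym2 V → Option α, G.IsEdgeColoringExcept c' s(u, w 0) →
      IsFan c' u w γ q → Disjoint (missingColors c' u) (missingColors c' (w q)))
    (hdisj : ∀ i j, i < j → j < p → Disjoint (missingColors c (w i)) (missingColors c (w j)))
    (hi : i < p) : Disjoint (missingColors c (w i)) (missingColors c (w p)) := by
  classical
  refine Set.disjoint_left.mpr fun τ hτi hτp => ?_
  obtain ⟨β, hβ⟩ := hc.nonempty_missingColors hw0 ((hc.eq_none_iff hw0).mpr rfl) hu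
  have hγ (j : ℕ) (hj : j < p) (h : γ j = τ) : j = i := by
    by_contra hji
    rcases lt_or_gt_of_ne hji with hji | hji
    · exact Set.disjoint_left.mp (hdisj j i hji hi) (hf.mem_missingColors hj) (h ▸ hτi)
    · exact Set.disjoint_left.mp (hdisj i j hji hj) hτi (h ▸ hf.mem_missingColors hj)
  set H := kempeGraph c τ β
  have hswap (q : ℕ) (hq : q ≤ p) (hqu : ¬ H.Reachable (w q) u)
      (hτq : τ ∈ missingColors c (w q)) (hγq : ∀ j < q, H.Reachable (w q) (w j) → γ j ≠ τ) :
      False := by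
    have hβu : β ∈ missingColors (SimpleGraph.kempeSwap c τ β (w q)) u := by
      rwa [missingColors_kempeSwap_of_not_reachable hqu]
    have hβq : β ∈ missingColors (SimpleGraph.kempeSwap c τ β (w q)) (w q) := by
      rwa [mem_missingColors_kempeSwap_of_reachable .rfl, Equiv.swap_apply_right]
    exact Set.disjoint_left.mp (hcenter q hq _ hc.kempeSwap
      ((hf.mono hq).kempeSwap hqu hβ hγq)) hβu hβq
  by_cases hiu : H.Reachable (w i) u
  · by_cases hpu : H.Reachable (w p) u
    · have hwu (j : ℕ) (hj : j ≤ p) : u ≠ w j := (hf.adj hc.toIsPartialEdgeColoring hw0 hj).ne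
      have hip : w i ≠ w p := fun h => hi.ne ((hf.injOn ((hc.eq_none_iff hw0).mpr rfl)
        (hf.injOn_color hdisj)) (Set.mem_Iic.mpr hi.le) (Set.mem_Iic.mpr le_rfl) h)
      exact hiu.symm.not_reachable_of_degree_le_one hc.degree_kempeGraph_le_two (hwu i hi.le)
        (hwu p le_rfl) hip (hc.degree_kempeGraph_le_one (Or.inr hβ))
        (hc.degree_kempeGraph_le_one (Or.inl hτi)) (hc.degree_kempeGraph_le_one (Or.inl hτp))
        hpu.symm
    · exact hswap p le_rfl hpu hτp fun j hj hpj h => hpu ((hγ j hj h ▸ hpj).trans hiu)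
  · exact hswap i hi.le hiu hτi fun j hj _ h => hj.ne (hγ j (hj.trans hi) h)

theorem disjoint_missingColors [Fintype V] [DecidableRel G.Adj] [Fintype α]
    (hG : ¬ G.lineGraph.Colorable (Fintype.card α)) (hu : G.degree u ≤ Fintype.card α)
    (hw0 : G.Adj u (w 0)) (p : ℕ) (c : Sym2 V → Option α)
    (hc : G.IsEdgeColoringExcept c s(u, w 0)) (hf : IsFan c u w γ p) :
    Disjoint (missingColors c u) (missingColors c (w p)) ∧
      ∀ i < p, Disjoint (missingColors c (w i)) (missingColors c (w p)) := by
  induction p using Nat.strong_induction_on generalizing c with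
  | _ p ih =>
  have hdisj (c' : Sym2 V → Option α) (hc' : G.IsEdgeColoringExcept c' s(u, w 0))
      (hf' : IsFan c' u w γ p) (i j : ℕ) (hij : i < j) (hj : j < p) :
      Disjoint (missingColors c' (w i)) (missingColors c' (w j)) :=
    (ih j hj c' hc' (hf'.mono hj.le)).2 i hij
  have hcenter (q : ℕ) (hq : q ≤ p) (c' : Sym2 V → Option α)
      (hc' : G.IsEdgeColoringExcept c' s(u, w 0)) (hf' : IsFan c' u w γ q) :
      Disjoint (missingColors c' u) (missingColors c' (w q)) := by
    rcases hq.lt_or_eq with hq | rfl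
    · exact (ih q hq c' hc' hf').1
    · exact hf'.disjoint_missingColors_center hG hc' hw0 (hdisj c' hc' hf')
  exact ⟨hcenter p le_rfl c hc hf, fun i hi =>
    hf.disjoint_missingColors_of_lt hc hu hw0 hcenter (hdisj c hc hf) hi⟩

theorem extend (hf : IsFan c u w γ p) (hy : c s(u, y) = some k)
    (hk : k ∈ missingColors c (w p)) :
    IsFan c u (Function.update w (p + 1) y) (Function.update γ p k) (p + 1) := by
  refine ⟨fun {j} hj => ?_, fun {j} hj => ?_⟩ <;>
    rcases Nat.lt_succ_iff_lt_or_eq.mp hj with hj | rfl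
  · rw [Function.update_of_ne (by omega), Function.update_of_ne hj.ne]
    exact hf.color_eq hj
  · simpa using hy
  · rw [Function.update_of_ne (by omega), Function.update_of_ne hj.ne]
    exact hf.mem_missingColors hj
  · simpa using hk

end IsFan

theorem exists_isFan (hc : G.IsPartialEdgeColoring c) {v : V} (huv : G.Adj u v)
    (hmiss : ∀ x, G.Adj u x → (missingColors c x).Nonempty)
    (hcenter : ∀ p w γ, w 0 = v → IsFan c u w γ p →
      Disjoint (missingColors c u) (missingColors c (w p))) :
    ∀ p, ∃ w γ, w 0 = v ∧ IsFan c u w γ p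
  | 0 => ⟨fun _ => v, fun _ => (hmiss v huv).some, rfl, ⟨nofun, nofun⟩⟩
  | p + 1 => by
    obtain ⟨w, γ, hw0, hf⟩ := exists_isFan hc huv hmiss hcenter p
    obtain ⟨k, hk⟩ := hmiss _ (hf.adj hc (hw0 ▸ huv) le_rfl)
    obtain ⟨y, hy⟩ : ∃ y, c s(u, y) = some k := by
      by_contra! h
      exact Set.disjoint_left.mp (hcenter p w γ hw0 hf) h hk
    exact ⟨_, _, by rwa [Function.update_of_ne (by omega)], hf.extend hy hk⟩

end Fan

theorem exists_adj_missingColors_eq_empty [Fintype V] [DecidableRel G.Adj] [Fintype α]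
    (hG : ¬ G.lineGraph.Colorable (Fintype.card α)) {u v : V}
    (hc : G.IsEdgeColoringExcept c s(u, v)) (huv : G.Adj u v)
    (hu : G.degree u ≤ Fintype.card α) : ∃ x, G.Adj u x ∧ missingColors c x = ∅ := by
  by_contra! hmiss
  have hfan (p : ℕ) (w : ℕ → V) (γ : ℕ → α) (hw0 : w 0 = v) (hf : IsFan c u w γ p) :=
    IsFan.disjoint_missingColors hG hu (hw0 ▸ huv) p c (hw0 ▸ hc) hf
  obtain ⟨w, γ, hw0, hf⟩ := exists_isFan hc.toIsPartialEdgeColoring huv hmiss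
    (fun p w γ hw0 hf => (hfan p w γ hw0 hf).1) (Fintype.card α + 1)
  have hγ := hf.injOn_color fun i j hij hj => (hfan j w γ hw0 (hf.mono hj.le)).2 i hij
  have := card_le_card_of_injOn γ (s := range (Fintype.card α + 1)) (t := univ)
    (fun _ _ => mem_univ _) (by simpa using hγ)
  simp at this

end SimpleGraph

/-- Vizing's Adjacency Lemma, part (b). -/
theorem vizing_adjacency_lemma_b [Fintype V] (G : SimpleGraph V) [DecidableRel G.Adj]
    (hG : G.IsDeltaCritical) {u v : V} (huv : G.Adj u v) (hv : G.degree v = G.maxDegree) :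
    2 ≤ ((G.neighborFinset u).filter fun z => G.degree z = G.maxDegree).card := by
  classical
  obtain ⟨c, hc⟩ := exists_isEdgeColoringExcept_of_colorable
    (hG.colorable_lineGraph_deleteEdges (G.mem_edgeSet.mpr huv))
  obtain ⟨x, hux, hx⟩ := exists_adj_missingColors_eq_empty
    (by simpa using hG.not_colorable_lineGraph) hc huv (by simpa using G.degree_le_maxDegree u)
  have hxv : x ≠ v := by
    rintro rfl
    have := hc.card_lt_degree hx huv.symm ((hc.eq_none_iff huv.symm).mpr Sym2.eq_swap)
    simp [hv] at this
  have hdx : G.degree x = G.maxDegree :=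
    (G.degree_le_maxDegree x).antisymm (by simpa using hc.card_le_degree hx)
  calc 2 = #{x, v} := (card_pair hxv).symm
    _ ≤ _ := card_le_card (by simp [insert_subset_iff, hux, huv, hdx, hv])
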